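/- arXiv:2309.00160 — 8 statements merged into one kernel-verified Lean document; each statement's English description precedes it below -/
import Mathlib

section
/- Let G be a task graph, let v be a node of G, and consider an assignment in which every worker assigned to v makes a strictly positive new contribution, i.e. w_v(k) > 0 for all k = 1,…,|σ_v|. Then the assignment is v-feasible if and only if Σ_{k=1}^{|σ_v|} e_{σ_v(k)v}·r_v(k)·(1−d_v)^{|σ_v|−k} ≥ s_v. -/
open Finset Filter

/-- A task graph: a finite weighted directed acyclic graph with node sizes `s`,
within-node interdependencies `dNode`, and edge interdependencies `dEdge`. -/
structure TaskGraph (V : Type*) [Fintype V] [DecidableEq V] where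
  E : Finset (V × V)
  s : V → ℝ
  dNode : V → ℝ
  dEdge : V → V → ℝ
  s_pos : ∀ v, 0 < s v
  dNode_mem : ∀ v, dNode v ∈ Set.Icc (0 : ℝ) 1
  dEdge_mem : ∀ p ∈ E, dEdge p.1 p.2 ∈ Set.Icc (0 : ℝ) 1
  acyclic : ∀ v, ¬ Relation.TransGen (fun u w => (u, w) ∈ E) v v

variable {V : Type*} [Fintype V] [DecidableEq V]

/-- The set `N(v)` of prerequisite nodes of `v`. -/
def TaskGraph.N (G : TaskGraph V) (v : V) : Finset V :=
  (G.E.filter (fun p => p.2 = v)).image Prod.fst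

/-- The amount of work completed on a subtask of size `sv` with internal interdependency `dv`
after the workers in `L` (each a pair of a worker and a time allocation) sequentially
contribute, where `e i` is the expertise of worker `i` on this subtask.  The `k`-th worker
first pays the context cost `c = min(prev * dv / e, r)` for prior work on the subtask and then
contributes `min(e * (r - c), sv - prev)` new units of work. -/
noncomputable def workAfter {I : Type*} (sv dv : ℝ) (e : I → ℝ) (L : List (I × ℝ)) : ℝ :=
  L.foldl (fun prev p =>
    prev + min (e p.1 * (p.2 - min (prev * dv / e p.1) p.2)) (sv - prev)) 0

/-- An assignment gives, for every node, a finite sequence of workers with time allocations. -/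
def Assignment (V I : Type*) := V → List (I × ℝ)

/-- An assignment is `v`-feasible if subtask `v` gets completed. -/
def VFeasible {I : Type*} (G : TaskGraph V) (e : I → V → ℝ) (A : Assignment V I) (v : V) : Prop :=
  workAfter (G.s v) (G.dNode v) (fun i => e i v) (A v) = G.s v

/-- The prerequisite context cost worker `i` pays when assigned to node `v`. -/
noncomputable def prereqCost {I : Type*} (G : TaskGraph V) (e : I → V → ℝ) (i : I) (v : V) : ℝ :=
  ∑ u ∈ G.N v, G.s u * G.dEdge u v / e i u

/-- The total time worker `i` spends under assignment `A`: their allocations plus the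
prerequisite context costs at every node they are assigned to. -/
noncomputable def workerTime {I : Type*} [DecidableEq I] (G : TaskGraph V) (e : I → V → ℝ)
    (A : Assignment V I) (i : I) : ℝ :=
  ∑ v : V, ((((A v).filter (fun p => p.1 = i)).map Prod.snd).sum
    + if i ∈ (A v).map Prod.fst then prereqCost G e i v else 0)

/-- A feasible assignment: nonnegative allocations, every subtask completed, and every
worker's total time within their available time. -/
def Feasible {I : Type*} [DecidableEq I] (G : TaskGraph V) (t : I → ℝ) (e : I → V → ℝ)
    (A : Assignment V I) : Prop :=
  (∀ v, ∀ p ∈ A v, 0 ≤ p.2) ∧ (∀ v, VFeasible G e A v) ∧ (∀ i, workerTime G e A i ≤ t i)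

/-- The task graph obtained by scaling all node sizes by `c > 0` (same interdependency family). -/
def TaskGraph.scale (G : TaskGraph V) (c : ℝ) (hc : 0 < c) : TaskGraph V :=
  { G with s := fun v => c * G.s v, s_pos := fun v => mul_pos hc (G.s_pos v) }

/-- The work capacity of the workers in `S`: the supremum of total task sizes over the
interdependency family of `G` admitting a feasible assignment using only workers in `S`. -/
noncomputable def capacityOn {I : Type*} [DecidableEq I] (G : TaskGraph V) (t : I → ℝ)
    (e : I → V → ℝ) (S : Set I) : ℝ :=
  sSup {x : ℝ | ∃ (c : ℝ) (hc : 0 < c) (A : Assignment V I),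
    Feasible (G.scale c hc) t e A ∧ (∀ v, ∀ p ∈ A v, p.1 ∈ S) ∧ x = ∑ v : V, c * G.s v}

/-- The work capacity `F_{I, h(G)}` of all workers of type `I`. -/
noncomputable def capacity {I : Type*} [DecidableEq I] (G : TaskGraph V) (t : I → ℝ)
    (e : I → V → ℝ) : ℝ :=
  capacityOn G t e Set.univ

private lemma workAfter_concat {I : Type*} (sv dv : ℝ) (e : I → ℝ) (M : List (I × ℝ))
    (p : I × ℝ) :
    workAfter sv dv e (M ++ [p]) = workAfter sv dv e M +
      min (e p.1 * (p.2 - min (workAfter sv dv e M * dv / e p.1) p.2))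
        (sv - workAfter sv dv e M) := by
  simp [workAfter, List.foldl_append]

private lemma foldl_geom_shift {I : Type*} (dv : ℝ) (e : I → ℝ) :
    ∀ (L : List (I × ℝ)) (x : ℝ),
      L.foldl (fun q p => q * (1 - dv) + e p.1 * p.2) x
        = x * (1 - dv) ^ L.length + L.foldl (fun q p => q * (1 - dv) + e p.1 * p.2) 0 := by
  intro L
  induction L with
  | nil => intro x; simp
  | cons p L ih =>
    intro x
    simp only [List.foldl_cons, List.length_cons]
    rw [ih (x * (1 - dv) + e p.1 * p.2), ih (0 * (1 - dv) + e p.1 * p.2)]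
    ring

private lemma foldl_geom_sum {I : Type*} (dv : ℝ) (e : I → ℝ) (L : List (I × ℝ)) :
    L.foldl (fun q p => q * (1 - dv) + e p.1 * p.2) 0
      = ∑ k : Fin L.length,
          e (L.get k).1 * (L.get k).2 * (1 - dv) ^ (L.length - 1 - (k : ℕ)) := by
  induction L with
  | nil => simp
  | cons p L ih =>
    rw [show (p :: L).foldl (fun q p => q * (1 - dv) + e p.1 * p.2) 0
          = L.foldl (fun q p => q * (1 - dv) + e p.1 * p.2) (0 * (1 - dv) + e p.1 * p.2)
        from rfl,
      foldl_geom_shift, ih]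
    simp only [List.length_cons]
    rw [Fin.sum_univ_succ]
    simp only [List.get_cons_succ, List.length_cons, List.get_cons_zero, Fin.val_zero,
      Fin.val_succ]
    have h1 : L.length + 1 - 1 - 0 = L.length := by omega
    rw [h1]
    have h2 : ∀ k : Fin L.length,
        e ((p :: L).get k.succ).1 * ((p :: L).get k.succ).2 *
            (1 - dv) ^ (L.length + 1 - 1 - ((k : ℕ) + 1))
          = e (L.get k).1 * (L.get k).2 * (1 - dv) ^ (L.length - 1 - (k : ℕ)) := by
      intro k
      have hg : (p :: L).get k.succ = L.get k := rfl
      rw [hg]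
      congr 2
      omega
    rw [Finset.sum_congr rfl (fun k _ => h2 k)]
    ring

/-- Lemma: subtask feasibility.  If every worker assigned to `v` makes a
strictly positive new contribution, then the assignment is `v`-feasible if and only if
`Σ_{k=1}^{|σ_v|} e_{σ_v(k)v} r_v(k) (1 - d_v)^{|σ_v| - k} ≥ s_v`. -/
theorem subtask_feasibility_iff {I : Type*} (G : TaskGraph V) (v : V)
    (t : I → ℝ) (ht : ∀ i, 0 < t i)
    (e : I → V → ℝ) (he : ∀ i u, 0 < e i u)
    (A : Assignment V I) (hr : ∀ u, ∀ p ∈ A u, 0 ≤ p.2)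
    (hpos : ∀ k : ℕ, k < (A v).length →
      workAfter (G.s v) (G.dNode v) (fun i => e i v) ((A v).take k) <
        workAfter (G.s v) (G.dNode v) (fun i => e i v) ((A v).take (k + 1))) :
    VFeasible G e A v ↔
      G.s v ≤ ∑ k : Fin (A v).length,
        e ((A v).get k).1 v * ((A v).get k).2 *
          (1 - G.dNode v) ^ ((A v).length - 1 - (k : ℕ)) := by
  classical
  set L := A v with hLdef
  set sv := G.s v with hsv
  set dv := G.dNode v with hdv
  set E : I → ℝ := fun i => e i v with hE
  have hsv_pos : 0 < sv := G.s_pos v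
  have hE_pos : ∀ i, 0 < E i := fun i => he i v
  set n := L.length with hn
  -- Q k is the "uncapped geometric" work
  set Q : ℕ → ℝ := fun k => (L.take k).foldl (fun q p => q * (1 - dv) + E p.1 * p.2) 0
    with hQdef
  have htake : ∀ k (hk : k < n), L.take (k + 1) = L.take k ++ [L.get ⟨k, hk⟩] := by
    intro k hk
    rw [← List.take_concat_get hk]
    simp
  have key : ∀ k, k ≤ n → workAfter sv dv E (L.take k) = min (Q k) sv := by
    intro k hk
    induction k with
    | zero =>
      simp only [List.take_zero]
      have : workAfter sv dv E ([] : List (I × ℝ)) = 0 := by simp [workAfter]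
      rw [this]
      simp only [hQdef, List.take_zero, List.foldl_nil]
      exact (min_eq_left hsv_pos.le).symm
    | succ k ih =>
      have hkn : k < n := hk
      have ihk := ih hkn.le
      set a := workAfter sv dv E (L.take k) with ha
      set p := L.get ⟨k, hkn⟩ with hp
      have hconcat : workAfter sv dv E (L.take (k + 1)) =
          a + min (E p.1 * (p.2 - min (a * dv / E p.1) p.2)) (sv - a) := by
        rw [htake k hkn, workAfter_concat]
      have hlt := hpos k hkn
      rw [hconcat] at hlt
      have hmin_pos : 0 < min (E p.1 * (p.2 - min (a * dv / E p.1) p.2)) (sv - a) := by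
        linarith
      have h1 : 0 < E p.1 * (p.2 - min (a * dv / E p.1) p.2) :=
        lt_of_lt_of_le hmin_pos (min_le_left _ _)
      have h2 : 0 < sv - a := lt_of_lt_of_le hmin_pos (min_le_right _ _)
      have hc_lt : min (a * dv / E p.1) p.2 < p.2 := by
        by_contra h
        push_neg at h
        have : min (a * dv / E p.1) p.2 = p.2 := le_antisymm (min_le_right _ _) h
        rw [this] at h1
        simp at h1
      have hc_eq : min (a * dv / E p.1) p.2 = a * dv / E p.1 := by
        apply min_eq_left
        rcases min_lt_iff.mp hc_lt with h | h
        · exact h.le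
        · exact absurd h (lt_irrefl _)
      have hEne : E p.1 ≠ 0 := (hE_pos p.1).ne'
      have hval : E p.1 * (p.2 - min (a * dv / E p.1) p.2) = E p.1 * p.2 - a * dv := by
        rw [hc_eq, mul_sub, mul_div_cancel₀ _ hEne]
      -- a = Q k
      have haQ : a = Q k := by
        rw [ihk]
        have hQlt : Q k < sv := by
          rcases lt_or_ge (Q k) sv with h | h
          · exact h
          · exfalso
            rw [ihk] at h2
            rw [min_eq_right h] at h2
            linarith
        exact min_eq_left hQlt.le
      have hQsucc : Q (k + 1) = Q k * (1 - dv) + E p.1 * p.2 := by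
        simp only [hQdef]
        rw [htake k hkn, List.foldl_append]
        rfl
      rw [hconcat, hval, hQsucc, ← haQ]
      have : a + min (E p.1 * p.2 - a * dv) (sv - a)
          = min (a + (E p.1 * p.2 - a * dv)) (a + (sv - a)) := by
        rcases le_total (E p.1 * p.2 - a * dv) (sv - a) with h | h
        · rw [min_eq_left h, min_eq_left (by linarith)]
        · rw [min_eq_right h, min_eq_right (by linarith)]
      rw [this]
      congr 1
      · ring
      · ring
  have hfinal := key n le_rfl
  rw [List.take_length] at hfinal
  have hQn : Q n = ∑ k : Fin L.length,
      E (L.get k).1 * (L.get k).2 * (1 - dv) ^ (L.length - 1 - (k : ℕ)) := by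
    simp only [hQdef, hn, List.take_length]
    exact foldl_geom_sum dv E L
  constructor
  · intro hfeas
    have : workAfter sv dv E L = sv := hfeas
    rw [hfinal] at this
    have hQge : sv ≤ Q n := by
      rcases le_total (Q n) sv with h | h
      · rw [min_eq_left h] at this; linarith
      · exact h
    rw [hQn] at hQge
    exact hQge
  · intro hsum
    show workAfter sv dv E L = sv
    rw [hfinal, hQn]
    exact min_eq_right hsum
end

section
/- Let G = (V,E,s,d) be a task graph and, for each n, let I_n be a set of n homogeneous workers, i.e. t_i = t and e_{iv} = e_v for all i ∈ I_n and v ∈ V. Let s = Σ_{v∈V} s_v and let D = max_{v∈V} [ s_v·d_v/e_v + Σ_{u∈N(v)} s_u·d_{uv}/e_u ]. If D > 0, then the work capacity F_{I_n, h(G)} tends to t·s/D as n → ∞. -/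
open Finset Filter

variable {V : Type*} [Fintype V] [DecidableEq V]

section AuxFold

variable {I : Type*}

/-- One step of the `workAfter` fold. -/
noncomputable def wstep (sv dv : ℝ) (e : I → ℝ) : ℝ → I × ℝ → ℝ :=
  fun prev p => prev + min (e p.1 * (p.2 - min (prev * dv / e p.1) p.2)) (sv - prev)

lemma wstep_le (sv dv : ℝ) (e : I → ℝ) (prev : ℝ) (p : I × ℝ) :
    wstep sv dv e prev p ≤ sv := by
  have := min_le_right (e p.1 * (p.2 - min (prev * dv / e p.1) p.2)) (sv - prev)
  simp only [wstep]; linarith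

lemma foldl_wstep_fixed (sv dv : ℝ) (e : I → ℝ) (he : ∀ i, 0 < e i) :
    ∀ L : List (I × ℝ), L.foldl (wstep sv dv e) sv = sv := by
  intro L
  induction L with
  | nil => rfl
  | cons p L ih =>
    have h1 : min (sv * dv / e p.1) p.2 ≤ p.2 := min_le_right _ _
    have h2 : 0 ≤ e p.1 * (p.2 - min (sv * dv / e p.1) p.2) :=
      mul_nonneg (he p.1).le (by linarith)
    have : wstep sv dv e sv p = sv := by
      simp only [wstep]
      have : min (e p.1 * (p.2 - min (sv * dv / e p.1) p.2)) (sv - sv) = 0 := by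
        rw [sub_self]; exact min_eq_right h2
      rw [this, add_zero]
    rw [List.foldl_cons, this, ih]

/-- Upper-bound extraction: if the fold completes a task of positive remaining size,
some worker's allocation is at least `sv * dv / e`. -/
lemma exists_big_alloc (sv dv : ℝ) (e : I → ℝ) (he : ∀ i, 0 < e i) (hd : dv ≤ 1) :
    ∀ (L : List (I × ℝ)) (prev : ℝ), prev < sv →
      L.foldl (wstep sv dv e) prev = sv → ∃ p ∈ L, sv * dv ≤ e p.1 * p.2 := by
  intro L
  induction L with
  | nil => intro prev h1 h2; simp at h2; exact absurd h2 (ne_of_lt h1)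
  | cons p L ih =>
    intro prev h1 h2
    rw [List.foldl_cons] at h2
    have hle : wstep sv dv e prev p ≤ sv := wstep_le sv dv e prev p
    rcases lt_or_eq_of_le hle with hlt | heq
    · obtain ⟨q, hq, hq2⟩ := ih _ hlt h2
      exact ⟨q, List.mem_cons_of_mem _ hq, hq2⟩
    · refine ⟨p, List.mem_cons_self, ?_⟩
      have hE : 0 < e p.1 := he p.1
      set cctx := min (prev * dv / e p.1) p.2 with hcctx
      have hmin : sv - prev ≤ e p.1 * (p.2 - cctx) := by
        by_contra hcon
        push_neg at hcon
        have : min (e p.1 * (p.2 - cctx)) (sv - prev) = e p.1 * (p.2 - cctx) :=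
          min_eq_left hcon.le
        simp only [wstep] at heq
        rw [← hcctx, this] at heq
        nlinarith [min_le_right (prev * dv / e p.1) p.2]
      have hcc : cctx = prev * dv / e p.1 := by
        rcases min_cases (prev * dv / e p.1) p.2 with ⟨h, _⟩ | ⟨h, hle2⟩
        · exact h
        · exfalso
          rw [hcctx, h] at hmin
          nlinarith
      have hfield : e p.1 * (prev * dv / e p.1) = prev * dv := by
        field_simp
      rw [hcc] at hmin
      nlinarith [(sv - prev) * (1 - dv)]

/-- Completion: with constant expertise and identical allocations that cover
context cost plus at least `a` of progress per step, a long enough list finishes. -/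
lemma foldl_wstep_reach (sv dv : ℝ) (e : I → ℝ) (ec r a : ℝ) (hec : 0 < ec)
    (hee : ∀ i, e i = ec) (ha : 0 < a) (hd : 0 ≤ dv)
    (key : sv * dv + a ≤ ec * r) :
    ∀ (L : List (I × ℝ)), (∀ p ∈ L, p.2 = r) →
    ∀ prev, 0 ≤ prev → prev ≤ sv → sv ≤ prev + L.length * a →
      L.foldl (wstep sv dv e) prev = sv := by
  intro L
  induction L with
  | nil =>
    intro _ prev _ h2 h3
    simp only [List.length_nil, Nat.cast_zero, zero_mul, add_zero] at h3
    simpa using le_antisymm h2 h3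
  | cons p L ih =>
    intro hall prev h1 h2 h3
    have hpr : p.2 = r := hall p (List.mem_cons_self)
    have hE : e p.1 = ec := hee p.1
    have hdv : prev * dv ≤ sv * dv := mul_le_mul_of_nonneg_right h2 hd
    have hcc : min (prev * dv / e p.1) p.2 = prev * dv / e p.1 := by
      rw [hE, hpr]
      have h4 : prev * dv ≤ r * ec := by rw [mul_comm]; nlinarith
      exact min_eq_left ((div_le_iff₀ hec).mpr h4)
    have hx : e p.1 * (p.2 - min (prev * dv / e p.1) p.2) = ec * r - prev * dv := by
      rw [hcc, hE, hpr]; field_simp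
    have hxa : a ≤ ec * r - prev * dv := by nlinarith
    rw [List.foldl_cons]
    simp only [wstep, hx]
    rcases le_total (sv - prev) (ec * r - prev * dv) with hc | hc
    · rw [min_eq_right hc]
      have : prev + (sv - prev) = sv := by ring
      rw [this]
      exact foldl_wstep_fixed sv dv e (fun i => by rw [hee i]; exact hec) L
    · rw [min_eq_left hc]
      apply ih (fun q hq => hall q (List.mem_cons_of_mem _ hq))
      · linarith
      · linarith
      · simp only [List.length_cons, Nat.cast_add, Nat.cast_one] at h3
        nlinarith

end AuxFold

lemma TaskGraph.mem_N' (G : TaskGraph V) {u v : V} (h : u ∈ G.N v) : (u, v) ∈ G.E := by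
  simp only [TaskGraph.N, Finset.mem_image, Finset.mem_filter] at h
  obtain ⟨p, ⟨hpE, hp2⟩, hp1⟩ := h
  have : p = (u, v) := Prod.ext hp1 hp2
  rwa [← this]

lemma prereq_nonneg {I : Type*} (G : TaskGraph V) (ev : V → ℝ) (hev : ∀ v, 0 < ev v)
    (i : I) (v : V) : 0 ≤ prereqCost G (fun _ v => ev v) i v := by
  apply Finset.sum_nonneg
  intro u hu
  exact div_nonneg (mul_nonneg (G.s_pos u).le (G.dEdge_mem _ (G.mem_N' hu)).1) (hev u).le

lemma prereq_scale {I : Type*} (G : TaskGraph V) (c : ℝ) (hc : 0 < c) (ev : V → ℝ)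
    (i : I) (v : V) :
    prereqCost (G.scale c hc) (fun _ v => ev v) i v
      = c * ∑ u ∈ G.N v, G.s u * G.dEdge u v / ev u := by
  simp only [prereqCost, TaskGraph.scale, Finset.mul_sum]
  exact Finset.sum_congr rfl (fun u _ => by ring)

/-- Upper bound: any feasible assignment on the `c`-scaled graph forces `c * D ≤ t`. -/
lemma scale_le_of_feasible [Nonempty V] (G : TaskGraph V) {I : Type*} [DecidableEq I]
    (t : ℝ) (ev : V → ℝ) (hev : ∀ v, 0 < ev v) (D : ℝ)
    (hD : D = Finset.univ.sup' Finset.univ_nonempty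
      (fun v => G.s v * G.dNode v / ev v + ∑ u ∈ G.N v, G.s u * G.dEdge u v / ev u))
    {c : ℝ} (hc : 0 < c) {A : Assignment V I}
    (hF : Feasible (G.scale c hc) (fun _ => t) (fun _ v => ev v) A) :
    c * D ≤ t := by
  obtain ⟨hnn, hvf, hwt⟩ := hF
  obtain ⟨v₀, -, hv₀⟩ := Finset.exists_mem_eq_sup' (Finset.univ_nonempty (α := V))
    (fun v => G.s v * G.dNode v / ev v + ∑ u ∈ G.N v, G.s u * G.dEdge u v / ev u)
  rw [← hD] at hv₀
  have hvf0 : (A v₀).foldl (wstep (c * G.s v₀) (G.dNode v₀) (fun _ : I => ev v₀)) 0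
      = c * G.s v₀ := hvf v₀
  have hsv : 0 < c * G.s v₀ := mul_pos hc (G.s_pos v₀)
  obtain ⟨p, hp, hbig⟩ := exists_big_alloc (c * G.s v₀) (G.dNode v₀) (fun _ : I => ev v₀)
    (fun _ => hev v₀) (G.dNode_mem v₀).2 (A v₀) 0 hsv hvf0
  set i := p.1 with hi
  have hwt0 : workerTime (G.scale c hc) (fun _ v => ev v) A i ≤ t := hwt i
  have hterm : ∀ v : V, 0 ≤ ((((A v).filter (fun q => q.1 = i)).map Prod.snd).sum
      + if i ∈ (A v).map Prod.fst then prereqCost (G.scale c hc) (fun _ v => ev v) i v else 0) := by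
    intro v
    have h1 : 0 ≤ (((A v).filter (fun q => q.1 = i)).map Prod.snd).sum := by
      apply List.sum_nonneg
      intro x hx
      obtain ⟨q, hq, hq2⟩ := List.mem_map.mp hx
      exact hq2 ▸ hnn v q (List.mem_of_mem_filter hq)
    have h2 : 0 ≤ (if i ∈ (A v).map Prod.fst
        then prereqCost (G.scale c hc) (fun _ v => ev v) i v else 0) := by
      split
      · exact prereq_nonneg _ ev hev i v
      · exact le_rfl
    linarith
  have hkey : (((A v₀).filter (fun q => q.1 = i)).map Prod.snd).sum
      + (if i ∈ (A v₀).map Prod.fst then prereqCost (G.scale c hc) (fun _ v => ev v) i v₀ else 0)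
      ≤ workerTime (G.scale c hc) (fun _ v => ev v) A i :=
    Finset.single_le_sum (fun v _ => hterm v) (Finset.mem_univ v₀)
  have hpmem : p ∈ (A v₀).filter (fun q => q.1 = i) :=
    List.mem_filter.mpr ⟨hp, by simp [hi]⟩
  have hsum : p.2 ≤ (((A v₀).filter (fun q => q.1 = i)).map Prod.snd).sum := by
    apply List.single_le_sum
    · intro x hx
      obtain ⟨q, hq, hq2⟩ := List.mem_map.mp hx
      exact hq2 ▸ hnn v₀ q (List.mem_of_mem_filter hq)
    · exact List.mem_map.mpr ⟨p, hpmem, rfl⟩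
  have hifst : i ∈ (A v₀).map Prod.fst := List.mem_map.mpr ⟨p, hp, rfl⟩
  rw [if_pos hifst, prereq_scale G c hc ev i v₀] at hkey
  have hr : c * G.s v₀ * G.dNode v₀ / ev v₀ ≤ p.2 := by
    rw [div_le_iff₀ (hev v₀)]
    nlinarith
  have hevpos := hev v₀
  have : c * D = c * G.s v₀ * G.dNode v₀ / ev v₀
      + c * ∑ u ∈ G.N v₀, G.s u * G.dEdge u v₀ / ev u := by
    rw [hv₀]; ring
  rw [this]
  linarith

lemma term_compute {n K : ℕ} (φ : V × Fin K ↪ Fin n)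
    (i : Fin n) (v : V) (rv C : ℝ) :
    (((((List.finRange K).map (fun k => (φ (v, k), rv))).filter
        (fun p => p.1 = i)).map Prod.snd).sum
      + if i ∈ ((List.finRange K).map (fun k => (φ (v, k), rv))).map Prod.fst then C else 0)
    = if ∃ k : Fin K, φ (v, k) = i then rv + C else 0 := by
  by_cases h : ∃ k : Fin K, φ (v, k) = i
  · obtain ⟨k₀, hk₀⟩ := h
    have hiff : ∀ k : Fin K, (φ (v, k) = i) ↔ (k = k₀) := by
      intro k
      constructor
      · intro hk
        have : φ (v, k) = φ (v, k₀) := by rw [hk, hk₀]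
        have := φ.injective this
        exact (Prod.mk.injEq _ _ _ _).mp this |>.2
      · rintro rfl; exact hk₀
    have hfil : ((List.finRange K).map (fun k => (φ (v, k), rv))).filter
        (fun p => p.1 = i) = [(φ (v, k₀), rv)] := by
      rw [List.filter_map]
      simp only [Function.comp_def]
      have hcongr : ∀ k ∈ List.finRange K,
          (fun k : Fin K => decide ((φ (v, k), rv).1 = i)) k
            = (fun k : Fin K => decide (k = k₀)) k := by
        intro k _
        simp only [decide_eq_decide]
        exact hiff k
      rw [List.filter_congr hcongr, List.filter_eq,
        List.count_eq_one_of_mem (List.nodup_finRange K) (List.mem_finRange k₀)]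
      rfl
    have hmem : i ∈ ((List.finRange K).map (fun k => (φ (v, k), rv))).map Prod.fst := by
      simp only [List.map_map, List.mem_map]
      exact ⟨k₀, List.mem_finRange k₀, hk₀⟩
    rw [hfil, if_pos hmem, if_pos ⟨k₀, hk₀⟩]
    simp
  · have hfil : ((List.finRange K).map (fun k => (φ (v, k), rv))).filter
        (fun p => p.1 = i) = [] := by
      rw [List.filter_eq_nil_iff]
      intro p hp
      obtain ⟨k, _, rfl⟩ := List.mem_map.mp hp
      simp only [decide_eq_true_eq]
      exact fun hk => h ⟨k, hk⟩
    have hmem : i ∉ ((List.finRange K).map (fun k => (φ (v, k), rv))).map Prod.fst := by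
      simp only [List.map_map, List.mem_map]
      rintro ⟨k, _, hk⟩
      exact h ⟨k, hk⟩
    rw [hfil, if_neg hmem, if_neg h]
    simp

/-- Lower bound: construction of a feasible assignment at scale `c` with `c * D ≤ (1-δ) t`,
for sufficiently many workers. -/
lemma exists_feasible_construction [Nonempty V] (G : TaskGraph V)
    (t : ℝ) (ht : 0 < t) (ev : V → ℝ) (hev : ∀ v, 0 < ev v) (D : ℝ)
    (hD : D = Finset.univ.sup' Finset.univ_nonempty
      (fun v => G.s v * G.dNode v / ev v + ∑ u ∈ G.N v, G.s u * G.dEdge u v / ev u))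
    (hDpos : 0 < D) (c δ : ℝ) (hc : 0 < c) (hδ0 : 0 < δ)
    (hcD : c * D ≤ (1 - δ) * t) :
    ∃ N : ℕ, ∀ n, N ≤ n → ∃ A : Assignment V (Fin n),
      Feasible (G.scale c hc) (fun _ => t) (fun _ v => ev v) A := by
  set P : V → ℝ := fun v => ∑ u ∈ G.N v, G.s u * G.dEdge u v / ev u with hPdef
  have hPD : ∀ v, G.s v * G.dNode v / ev v + P v ≤ D := by
    intro v
    rw [hD]
    exact Finset.le_sup' (fun v => G.s v * G.dNode v / ev v
      + ∑ u ∈ G.N v, G.s u * G.dEdge u v / ev u) (Finset.mem_univ v)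
  have hP0 : ∀ v, 0 ≤ P v := by
    intro v
    apply Finset.sum_nonneg
    intro u hu
    exact div_nonneg (mul_nonneg (G.s_pos u).le (G.dEdge_mem _ (G.mem_N' hu)).1) (hev u).le
  have hsd0 : ∀ v, 0 ≤ G.s v * G.dNode v / ev v := fun v =>
    div_nonneg (mul_nonneg (G.s_pos v).le (G.dNode_mem v).1) (hev v).le
  have hcP : ∀ v, c * P v ≤ (1 - δ) * t := by
    intro v
    have h1 := hPD v
    have h2 := hsd0 v
    nlinarith
  have hrδ : ∀ v, δ * t ≤ t - c * P v := by
    intro v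
    have := hcP v
    linarith
  have key : ∀ v, (c * G.s v) * G.dNode v + ev v * (δ * t) ≤ ev v * (t - c * P v) := by
    intro v
    have h5 : ev v * (G.s v * G.dNode v / ev v) = G.s v * G.dNode v :=
      mul_div_cancel₀ _ (hev v).ne'
    have h6 : c * (G.s v * G.dNode v / ev v + P v) ≤ (1 - δ) * t :=
      le_trans (mul_le_mul_of_nonneg_left (hPD v) hc.le) hcD
    have h7 : ev v * (c * (G.s v * G.dNode v / ev v + P v)) ≤ ev v * ((1 - δ) * t) :=
      mul_le_mul_of_nonneg_left h6 (hev v).le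
    have h8 : ev v * (c * (G.s v * G.dNode v / ev v + P v))
        = c * (ev v * (G.s v * G.dNode v / ev v)) + c * (ev v * P v) := by ring
    rw [h8, h5] at h7
    nlinarith [hev v]
  obtain ⟨Kr, hKr⟩ := exists_nat_ge
    (Finset.univ.sup' Finset.univ_nonempty (fun v => c * G.s v / (ev v * (δ * t))))
  have hK : ∀ v, c * G.s v ≤ Kr * (ev v * (δ * t)) := by
    intro v
    have ha : 0 < ev v * (δ * t) := mul_pos (hev v) (mul_pos hδ0 ht)
    have h1 : c * G.s v / (ev v * (δ * t)) ≤ (Kr : ℝ) :=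
      le_trans (Finset.le_sup' (fun v => c * G.s v / (ev v * (δ * t)))
        (Finset.mem_univ v)) hKr
    calc c * G.s v = (c * G.s v / (ev v * (δ * t))) * (ev v * (δ * t)) := by
          rw [div_mul_cancel₀ _ ha.ne']
      _ ≤ (Kr : ℝ) * (ev v * (δ * t)) := mul_le_mul_of_nonneg_right h1 ha.le
  refine ⟨Fintype.card V * Kr, fun n hn => ?_⟩
  have hcard : Fintype.card (V × Fin Kr) ≤ Fintype.card (Fin n) := by
    simpa [Fintype.card_prod] using hn
  obtain ⟨φ⟩ := Function.Embedding.nonempty_of_card_le hcard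
  refine ⟨fun v => (List.finRange Kr).map (fun k => (φ (v, k), t - c * P v)), ?_, ?_, ?_⟩
  · intro v p hp
    obtain ⟨k, _, rfl⟩ := List.mem_map.mp hp
    have h1 := hrδ v
    have h2 : 0 < δ * t := mul_pos hδ0 ht
    simp only
    linarith
  · intro v
    show List.foldl (wstep (c * G.s v) (G.dNode v) (fun _ : Fin n => ev v)) 0
      ((List.finRange Kr).map (fun k => (φ (v, k), t - c * P v))) = c * G.s v
    apply foldl_wstep_reach (c * G.s v) (G.dNode v) _ (ev v) (t - c * P v)
      (ev v * (δ * t)) (hev v) (fun _ => rfl) (mul_pos (hev v) (mul_pos hδ0 ht)) (G.dNode_mem v).1 (key v)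
    · intro p hp
      obtain ⟨k, _, rfl⟩ := List.mem_map.mp hp
      rfl
    · exact le_rfl
    · exact (mul_pos hc (G.s_pos v)).le
    · have := hK v
      simp only [List.length_map, List.length_finRange]
      linarith
  · intro i
    have hwte : workerTime (G.scale c hc) (fun _ v => ev v)
        (fun v => (List.finRange Kr).map (fun k => (φ (v, k), t - c * P v))) i
        = ∑ v : V, (if ∃ k : Fin Kr, φ (v, k) = i then t else 0) := by
      unfold workerTime
      apply Finset.sum_congr rfl
      intro v _
      have hps : prereqCost (G.scale c hc) (fun _ v => ev v) i v = c * P v :=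
        prereq_scale G c hc ev i v
      beta_reduce
      rw [hps, term_compute φ i v (t - c * P v) (c * P v)]
      by_cases h : ∃ k : Fin Kr, φ (v, k) = i
      · rw [if_pos h, if_pos h]; ring
      · rw [if_neg h, if_neg h]
    rw [hwte]
    by_cases hex : ∃ vk : V × Fin Kr, φ vk = i
    · obtain ⟨⟨v₀, k₀⟩, hvk⟩ := hex
      have hsum : ∑ v : V, (if ∃ k : Fin Kr, φ (v, k) = i then t else 0) = t := by
        rw [Finset.sum_eq_single_of_mem v₀ (Finset.mem_univ _)]
        · exact if_pos ⟨k₀, hvk⟩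
        · intro v _ hv
          apply if_neg
          rintro ⟨k, hk⟩
          apply hv
          have := φ.injective (hk.trans hvk.symm)
          exact ((Prod.mk.injEq _ _ _ _).mp this).1
      exact le_of_eq hsum
    · have hall : ∀ v : V, (if ∃ k : Fin Kr, φ (v, k) = i then t else 0) = 0 := by
        intro v
        apply if_neg
        rintro ⟨k, hk⟩
        exact hex ⟨(v, k), hk⟩
      rw [Finset.sum_congr rfl (fun v _ => hall v), Finset.sum_const, smul_zero]
      exact ht.le

/-- Theorem: limits of feasible work with infinite workers, general form.
For homogeneous workers with time `t` and expertise `ev v` on each node `v`, the work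
capacity `F_{I_n, h(G)}` tends to `t * s / D` as `n → ∞`, where `s = Σ_v s_v` and
`D = max_v [s_v d_v / e_v + Σ_{u ∈ N(v)} s_u d_{uv} / e_u]`. -/
theorem capacity_tendsto_infinite_workers [Nonempty V] (G : TaskGraph V)
    (t : ℝ) (ht : 0 < t) (ev : V → ℝ) (hev : ∀ v, 0 < ev v) (D : ℝ)
    (hD : D = Finset.univ.sup' Finset.univ_nonempty
      (fun v => G.s v * G.dNode v / ev v + ∑ u ∈ G.N v, G.s u * G.dEdge u v / ev u))
    (hDpos : 0 < D) :
    Tendsto (fun n : ℕ => capacity (I := Fin n) G (fun _ => t) (fun _ v => ev v))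
      atTop (nhds (t * (∑ v : V, G.s v) / D)) := by
  have hs : 0 < ∑ v : V, G.s v := Finset.sum_pos (fun v _ => G.s_pos v) Finset.univ_nonempty
  set s : ℝ := ∑ v : V, G.s v with hsdef
  set L : ℝ := t * s / D with hLdef
  have hL : 0 < L := by positivity
  -- upper bound on every element of the capacity set
  have ub : ∀ (n : ℕ) (x : ℝ), (∃ (c : ℝ) (hc : 0 < c) (A : Assignment V (Fin n)),
      Feasible (G.scale c hc) (fun _ => t) (fun _ v => ev v) A ∧
      (∀ v, ∀ p ∈ A v, p.1 ∈ (Set.univ : Set (Fin n))) ∧ x = ∑ v : V, c * G.s v) → x ≤ L := by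
    rintro n x ⟨c, hc, A, hF, -, hx⟩
    have hcD : c * D ≤ t := scale_le_of_feasible G t ev hev D hD hc hF
    have hxc : x = c * s := by
      rw [hx, hsdef, Finset.mul_sum]
    have hcle : c ≤ t / D := (le_div_iff₀ hDpos).mpr hcD
    rw [hxc, hLdef]
    calc c * s ≤ (t / D) * s := mul_le_mul_of_nonneg_right hcle hs.le
      _ = t * s / D := by ring
  have cap_le : ∀ n : ℕ, capacity (I := Fin n) G (fun _ => t) (fun _ v => ev v) ≤ L := by
    intro n
    exact Real.sSup_le (fun x hx => ub n x hx) hL.le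
  have bdd : ∀ n : ℕ, BddAbove {x : ℝ | ∃ (c : ℝ) (hc : 0 < c) (A : Assignment V (Fin n)),
      Feasible (G.scale c hc) (fun _ => t) (fun _ v => ev v) A ∧
      (∀ v, ∀ p ∈ A v, p.1 ∈ (Set.univ : Set (Fin n))) ∧ x = ∑ v : V, c * G.s v} :=
    fun n => ⟨L, fun x hx => ub n x hx⟩
  rw [Metric.tendsto_atTop]
  intro ε hε
  set δ : ℝ := min (ε / (2 * L)) (1 / 2) with hδdef
  have hδ0 : 0 < δ := lt_min (by positivity) (by norm_num)
  have hδ1 : δ < 1 := lt_of_le_of_lt (min_le_right _ _) (by norm_num)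
  set c : ℝ := (1 - δ) * t / D with hcdef
  have hc : 0 < c := by
    have : 0 < 1 - δ := by linarith
    positivity
  have hcD : c * D ≤ (1 - δ) * t := le_of_eq (div_mul_cancel₀ _ hDpos.ne')
  obtain ⟨N, hN⟩ := exists_feasible_construction G t ht ev hev D hD hDpos c δ hc hδ0 hcD
  refine ⟨N, fun n hn => ?_⟩
  obtain ⟨A, hA⟩ := hN n hn
  have hmem : (∑ v : V, c * G.s v) ∈ {x : ℝ | ∃ (c : ℝ) (hc : 0 < c) (A : Assignment V (Fin n)),
      Feasible (G.scale c hc) (fun _ => t) (fun _ v => ev v) A ∧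
      (∀ v, ∀ p ∈ A v, p.1 ∈ (Set.univ : Set (Fin n))) ∧ x = ∑ v : V, c * G.s v} :=
    ⟨c, hc, A, hA, fun v p _ => Set.mem_univ _, rfl⟩
  have hge : (∑ v : V, c * G.s v) ≤ capacity (I := Fin n) G (fun _ => t) (fun _ v => ev v) :=
    le_csSup (bdd n) hmem
  have hcs : (∑ v : V, c * G.s v) = (1 - δ) * L := by
    rw [← Finset.mul_sum, ← hsdef, hcdef, hLdef]
    ring
  have hdL : δ * L ≤ ε / 2 := by
    have h1 : δ ≤ ε / (2 * L) := min_le_left _ _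
    have h2 : δ * L ≤ (ε / (2 * L)) * L := mul_le_mul_of_nonneg_right h1 hL.le
    have h3 : (ε / (2 * L)) * L = ε / 2 := by
      field_simp
    linarith
  have hcap_le := cap_le n
  have hcap_ge : (1 - δ) * L ≤ capacity (I := Fin n) G (fun _ => t) (fun _ v => ev v) := by
    rw [← hcs]; exact hge
  rw [Real.dist_eq, abs_sub_comm, abs_of_nonneg (by linarith)]
  have : (1 - δ) * L = L - δ * L := by ring
  rw [this] at hcap_ge
  linarith
end

section
/- Let G be a task graph and let v be a node of G with d_v ∈ (0,1]. Let P = Σ_{u∈N(v)} s_u·d_{uv}/e_u be the prerequisite context cost of v for a worker with expertise e_u on each prerequisite u. Suppose n homogeneous workers, each with available time t ≥ P and expertise e_v on v and e_u on each u ∈ N(v), are assigned only to v, each allocated all of their remaining time r_v(k) = t − P. Then this assignment is v-feasible if and only if s_v ≤ e_v·(t − P)·(1 − (1−d_v)^n)/d_v. -/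
open Finset Filter

variable {V : Type*} [Fintype V] [DecidableEq V]

lemma foldl_homog {I : Type*} (S d e r : ℝ) (hS : 0 < S) (hd : 0 < d) (hd1 : d ≤ 1)
    (he : 0 < e) (hr : 0 ≤ r) :
    ∀ (L : List (I × ℝ)) (k : ℕ), (∀ p ∈ L, p.2 = r) →
      List.foldl (fun prev p => prev + min (e * (p.2 - min (prev * d / e) p.2)) (S - prev))
        (min S (e * r / d * (1 - (1 - d) ^ k))) L
      = min S (e * r / d * (1 - (1 - d) ^ (k + L.length))) := by
  intro L
  induction L with
  | nil => intro k _; simp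
  | cons p L ih =>
    intro k hall
    have hq0 : 0 ≤ 1 - d := by linarith
    have hq1 : 1 - d ≤ 1 := by linarith
    have hM0 : 0 ≤ e * r / d := by positivity
    set M := e * r / d with hM
    set X := M * (1 - (1 - d) ^ k) with hX
    have hXM : X ≤ M := by
      have : (0:ℝ) ≤ (1 - d) ^ k := pow_nonneg hq0 k
      nlinarith
    have hMd : M * d = e * r := by rw [hM, div_mul_cancel₀ _ hd.ne']
    have hpr : p.2 = r := hall p List.mem_cons_self
    have hstep : (min S X) + min (e * (p.2 - min ((min S X) * d / e) p.2)) (S - min S X)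
        = min S (M * (1 - (1 - d) ^ (k + 1))) := by
      have haM : min S X ≤ M := le_trans (min_le_right _ _) hXM
      have h1 : min ((min S X) * d / e) p.2 = (min S X) * d / e := by
        rw [min_eq_left]
        rw [hpr]
        rw [div_le_iff₀ he]
        nlinarith [haM]
      rw [h1, hpr]
      have h2 : e * (r - min S X * d / e) = e * r - min S X * d := by field_simp
      rw [h2, ← min_add_add_left]
      have h3 : min S X + (S - min S X) = S := by ring
      rw [h3]
      have hmono : M * (1 - (1 - d) ^ k) ≤ M * (1 - (1 - d) ^ (k + 1)) := by
        have : (1 - d) ^ (k + 1) ≤ (1 - d) ^ k := pow_le_pow_of_le_one hq0 hq1 (Nat.le_succ k)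
        nlinarith
      rcases le_total S X with hSX | hXS
      · rw [min_eq_left hSX]
        have hSd : S * d ≤ e * r := by
          calc S * d ≤ X * d := by nlinarith
            _ ≤ M * d := by nlinarith
            _ = e * r := hMd
        rw [min_eq_right (by linarith), min_eq_left (by rw [← hX] at hmono; linarith)]
      · rw [min_eq_right hXS]
        have : X + (e * r - X * d) = M * (1 - (1 - d) ^ (k + 1)) := by
          rw [hX, ← hMd, pow_succ]; ring
        rw [this, min_comm]
    simp only [List.foldl_cons, hstep]
    have := ih (k + 1) (fun q hq => hall q (List.mem_cons_of_mem p hq))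
    rw [this, show k + 1 + L.length = k + (p :: L).length from by
      simp only [List.length_cons]; omega]

/-- maximum feasible subtask size for `n` homogeneous workers.  If `n`
homogeneous workers (time `t ≥ P`, expertise `eFun u` on every node `u`) are each assigned
only to `v` with all their remaining time `t - P` after the prerequisite context cost
`P = Σ_{u ∈ N(v)} s_u d_{uv} / e_u`, then the assignment is `v`-feasible if and only if
`s_v ≤ e_v (t - P) (1 - (1 - d_v)^n) / d_v`. -/
theorem vFeasible_homogeneous_iff {I : Type*} (G : TaskGraph V) (v : V)
    (hdv : 0 < G.dNode v) (eFun : V → ℝ) (he : ∀ u, 0 < eFun u)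
    (t P : ℝ) (hP : P = ∑ u ∈ G.N v, G.s u * G.dEdge u v / eFun u) (htP : P ≤ t)
    (n : ℕ) (L : List (I × ℝ)) (hlen : L.length = n) (hall : ∀ p ∈ L, p.2 = t - P) :
    workAfter (G.s v) (G.dNode v) (fun _ => eFun v) L = G.s v ↔
      G.s v ≤ eFun v * (t - P) * (1 - (1 - G.dNode v) ^ n) / G.dNode v := by
  have hS := G.s_pos v
  have hd1 : G.dNode v ≤ 1 := (G.dNode_mem v).2
  have hr : (0:ℝ) ≤ t - P := by linarith
  have key := foldl_homog (G.s v) (G.dNode v) (eFun v) (t - P) hS hdv hd1 (he v) hr L 0 hall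
  have h0 : (0:ℝ) = min (G.s v) (eFun v * (t - P) / G.dNode v * (1 - (1 - G.dNode v) ^ 0)) := by
    simp [min_eq_right hS.le]
  simp only [workAfter]
  rw [h0, key, hlen, zero_add, min_eq_left_iff, div_mul_eq_mul_div]
end

section
/- Let 0 < d ≤ 1, e > 0, s > 0, P ≥ 0, and ε ∈ (0,1), and set c = s·d/e + P (the maximum context cost of the subtask). If t ≥ c + (s·d/e)·ε/(1−ε) and n is a natural number with n ≥ (1/d)·ln(1/ε), then e·(t − P)·(1 − (1−d)^n)/d ≥ s; that is, n homogeneous workers each with available time t, each assigned only to the subtask with their full remaining time t − P after paying the prerequisite context cost P, suffice to complete a subtask of size s with internal interdependency d and expertise e. -/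
/-- sharp threshold around the maximum context cost.  With maximum context
cost `c = s d / e + P`, once `t ≥ c + (s d / e) ε / (1 - ε)`, any `n ≥ (1/d) ln(1/ε)`
homogeneous workers suffice to complete the subtask:
`e (t - P) (1 - (1 - d)^n) / d ≥ s`. -/
theorem sharp_threshold (d e s P ε t c : ℝ) (hd : 0 < d) (hd1 : d ≤ 1)
    (he : 0 < e) (hs : 0 < s) (hP : 0 ≤ P) (hε : 0 < ε) (hε1 : ε < 1)
    (hc : c = s * d / e + P)
    (ht : t ≥ c + (s * d / e) * ε / (1 - ε))
    (n : ℕ) (hn : (n : ℝ) ≥ (1 / d) * Real.log (1 / ε)) :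
    e * (t - P) * (1 - (1 - d) ^ n) / d ≥ s := by
  have h1ε : 0 < 1 - ε := by linarith
  -- (1-d)^n ≤ ε
  have hpow : (1 - d) ^ n ≤ ε := by
    have h1 : (1 - d) ^ n ≤ Real.exp (-d) ^ n := by
      apply pow_le_pow_left₀ (by linarith)
      linarith [Real.add_one_le_exp (-d)]
    have h2 : Real.exp (-d) ^ n = Real.exp (-(d * n)) := by
      rw [← Real.exp_nat_mul]; ring_nf
    have hlog : Real.log (1 / ε) = -Real.log ε := by
      rw [one_div, Real.log_inv]
    have h3 : -(d * n) ≤ Real.log ε := by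
      have hdn : Real.log (1 / ε) ≤ d * n := by
        have := mul_le_mul_of_nonneg_left hn (le_of_lt hd)
        calc Real.log (1 / ε) = d * (1 / d * Real.log (1 / ε)) := by
              field_simp
          _ ≤ d * n := this
      linarith [hlog ▸ hdn]
    calc (1 - d) ^ n ≤ Real.exp (-(d * n)) := h2 ▸ h1
      _ ≤ Real.exp (Real.log ε) := Real.exp_le_exp.mpr h3
      _ = ε := Real.exp_log hε
  -- (t - P) * (1 - ε) * e ≥ s * d
  have htP : (t - P) * ((1 - ε) * e) ≥ s * d := by
    have h : t - P ≥ s * d / e + (s * d / e) * ε / (1 - ε) := by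
      rw [hc] at ht; linarith
    have key : (s * d / e + (s * d / e) * ε / (1 - ε)) * ((1 - ε) * e) = s * d := by
      field_simp; ring
    calc s * d = (s * d / e + (s * d / e) * ε / (1 - ε)) * ((1 - ε) * e) := key.symm
      _ ≤ (t - P) * ((1 - ε) * e) :=
        mul_le_mul_of_nonneg_right h (by positivity)
  rw [ge_iff_le, le_div_iff₀ hd]
  have h1 : 1 - (1 - d) ^ n ≥ 1 - ε := by linarith
  have hpos : 0 < t - P := by nlinarith [mul_pos hs hd, mul_pos h1ε he]
  nlinarith [mul_le_mul_of_nonneg_left h1 (le_of_lt (mul_pos he hpos))]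
end

section
/- Let G = (V,E,s,d) be a task graph with d_v > 0 for every node v, let I be a finite set of workers, and let ε ∈ (0,1). Then there exists a subset I(ε) ⊆ I with |I(ε)| ≤ Σ_{v∈V} ⌈(1/d_v)·ln(1/ε)⌉ such that F_{I(ε), h(G)} ≥ (1−ε)·F_{I, h(G)}. -/
open Finset Filter

variable {V : Type*} [Fintype V] [DecidableEq V]

section Aux
variable {W : Type*}

noncomputable def nstep (S d : ℝ) (e : W → ℝ) (x : ℝ) (p : W × ℝ) : ℝ :=
  x + min (e p.1 * (p.2 - min (x * d / e p.1) p.2)) (S - x)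

lemma nstep_eq (S d : ℝ) (e : W → ℝ) (x : ℝ) (p : W × ℝ) (he : 0 < e p.1) :
    nstep S d e x p = min (max (x * (1 - d) + e p.1 * p.2) x) S := by
  unfold nstep
  have h2 : min (x * d / e p.1) p.2 = min (x * d) (e p.1 * p.2) / e p.1 := by
    rw [eq_comm]
    rcases le_total (x * d) (e p.1 * p.2) with h | h
    · rw [min_eq_left h, min_eq_left (by rw [div_le_iff₀ he]; linarith)]
    · rw [min_eq_right h, min_eq_right (by rw [le_div_iff₀ he]; linarith),
        mul_comm, mul_div_assoc, div_self he.ne', mul_one]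
  have h3 : e p.1 * (p.2 - min (x * d / e p.1) p.2)
      = e p.1 * p.2 - min (x * d) (e p.1 * p.2) := by
    rw [h2, mul_sub, mul_div_cancel₀ _ he.ne']
  rw [h3]
  rcases le_total (x * d) (e p.1 * p.2) with h | h <;>
    simp [min_def, max_def] <;> split_ifs <;> linarith

variable {S S' d : ℝ} {e : W → ℝ}

lemma nstep_le (he : 0 < e p.1) : nstep S d e x p ≤ S := by
  rw [nstep_eq _ _ _ _ _ he]; exact min_le_right _ _

lemma le_nstep (he : 0 < e p.1) (hx : x ≤ S) : x ≤ nstep S d e x p := by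
  rw [nstep_eq _ _ _ _ _ he]; exact le_min (le_max_right _ _) hx

lemma nstep_mono (he : 0 < e p.1) (hd1 : d ≤ 1) (hSS : S' ≤ S) (hba : b ≤ a) :
    nstep S' d e b p ≤ nstep S d e a p := by
  rw [nstep_eq _ _ _ _ _ he, nstep_eq _ _ _ _ _ he]
  refine min_le_min (max_le_max ?_ hba) hSS
  nlinarith

/-- run stays in `[a, S]`. -/
lemma le_foldl_nstep (he : ∀ i, 0 < e i) :
    ∀ (L : List (W × ℝ)) (a : ℝ), a ≤ S → a ≤ L.foldl (nstep S d e) a ∧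
      L.foldl (nstep S d e) a ≤ S
  | [], a, ha => ⟨le_rfl, ha⟩
  | p :: L, a, ha => by
    have h1 : a ≤ nstep S d e a p := le_nstep (he p.1) ha
    have h2 : nstep S d e a p ≤ S := nstep_le (he p.1)
    obtain ⟨h3, h4⟩ := le_foldl_nstep he L (nstep S d e a p) h2
    exact ⟨le_trans h1 h3, h4⟩

/-- upper bound on run by total expertise-weighted time. -/
lemma foldl_nstep_le (he : ∀ i, 0 < e i) (hd : 0 ≤ d) :
    ∀ (L : List (W × ℝ)) (a : ℝ), 0 ≤ a → a ≤ S → (∀ p ∈ L, 0 ≤ p.2) →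
      L.foldl (nstep S d e) a ≤ a + (L.map (fun p => e p.1 * p.2)).sum
  | [], a, _, _, _ => by simp
  | p :: L, a, ha0, haS, hr => by
    have hb := le_foldl_nstep (S := S) (d := d) he (p :: L) a haS
    have h1 : nstep S d e a p ≤ a + e p.1 * p.2 := by
      rw [nstep_eq _ _ _ _ _ (he p.1)]
      have : a * (1 - d) + e p.1 * p.2 ≤ a + e p.1 * p.2 := by nlinarith
      have h2 : 0 ≤ e p.1 * p.2 := mul_nonneg (he p.1).le (hr p (by simp))
      rcases max_cases (a * (1 - d) + e p.1 * p.2) a with ⟨h, _⟩ | ⟨h, _⟩ <;>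
        · rw [h]; refine le_trans (min_le_left _ _) (by linarith)
    have h3 : 0 ≤ nstep S d e a p := le_trans ha0 (le_nstep (he p.1) haS)
    have h4 := foldl_nstep_le he hd L (nstep S d e a p) h3 (nstep_le (he p.1))
      (fun q hq => hr q (by simp [hq]))
    simp only [List.foldl_cons, List.map_cons, List.sum_cons]
    linarith

open Classical in
/-- number of strictly-productive steps along the run. -/
noncomputable def kpos (S d : ℝ) (e : W → ℝ) : List (W × ℝ) → ℝ → ℕ
  | [], _ => 0
  | p :: L, a =>
      (if a < nstep S d e a p then 1 else 0) + kpos S d e L (nstep S d e a p)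

open Classical in
/-- keep the last `m` strictly-productive steps. -/
noncomputable def sel (S d : ℝ) (e : W → ℝ) : List (W × ℝ) → ℝ → ℕ → List (W × ℝ)
  | [], _, _ => []
  | p :: L, a, m =>
      if a < nstep S d e a p ∧ kpos S d e L (nstep S d e a p) < m then
        p :: sel S d e L (nstep S d e a p) m
      else sel S d e L (nstep S d e a p) m

lemma sel_sublist (S d : ℝ) (e : W → ℝ) :
    ∀ (L : List (W × ℝ)) (a : ℝ) (m : ℕ), List.Sublist (sel S d e L a m) L
  | [], _, _ => by simp [sel]
  | p :: L, a, m => by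
    rw [sel]
    split_ifs
    · exact (sel_sublist S d e L _ m).cons₂ p
    · exact (sel_sublist S d e L _ m).cons p

lemma sel_length (S d : ℝ) (e : W → ℝ) :
    ∀ (L : List (W × ℝ)) (a : ℝ) (m : ℕ),
      (sel S d e L a m).length ≤ kpos S d e L a ∧ (sel S d e L a m).length ≤ m
  | [], _, _ => by simp [sel, kpos]
  | p :: L, a, m => by
    obtain ⟨h1, h2⟩ := sel_length S d e L (nstep S d e a p) m
    rw [sel, kpos]
    by_cases h : a < nstep S d e a p ∧ kpos S d e L (nstep S d e a p) < m
    · rw [if_pos h, if_pos h.1]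
      simp only [List.length_cons]
      have := h.2
      exact ⟨by omega, by omega⟩
    · rw [if_neg h]
      exact ⟨le_trans h1 (by split_ifs <;> omega), h2⟩

lemma keep_lemma (he : ∀ i, 0 < e i) (hd0 : 0 ≤ d) (hd1 : d ≤ 1) (hSS : S' ≤ S) (m : ℕ)
    (L : List (W × ℝ)) : ∀ (a b : ℝ), 0 ≤ b → b ≤ a → a ≤ S → b ≤ S' →
    kpos S d e L a ≤ m →
    min S' (L.foldl (nstep S d e) a - (a - b) * (1 - d) ^ (kpos S d e L a))
      ≤ (sel S d e L a m).foldl (nstep S' d e) b := by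
  induction L with
  | nil =>
    intro a b hb0 hba haS hbS' hk
    simp only [kpos, sel, List.foldl_nil, pow_zero]
    have h : a - (a - b) * 1 = b := by ring
    rw [h]
    exact min_le_right _ _
  | cons p L IH =>
    intro a b hb0 hba haS hbS' hk
    have hep := he p.1
    have haa' : a ≤ nstep S d e a p := le_nstep hep haS
    have ha'S : nstep S d e a p ≤ S := nstep_le hep
    rw [kpos] at hk ⊢
    rw [sel]
    by_cases h : a < nstep S d e a p
    · have hk' : kpos S d e L (nstep S d e a p) < m := by
        rw [if_pos h] at hk; omega
      rw [if_pos h] at hk ⊢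
      rw [if_pos (And.intro h hk')]
      set a' := nstep S d e a p with ha'def
      set b' := nstep S' d e b p with hb'def
      have hbb' : b ≤ b' := le_nstep hep hbS'
      have hb'S' : b' ≤ S' := nstep_le hep
      have hb'a' : b' ≤ nstep S d e a p := nstep_mono hep hd1 hSS hba
      simp only [List.foldl_cons]
      rcases eq_or_lt_of_le hb'S' with hEq | hLt
      · exact le_trans (min_le_left _ _)
          (le_of_eq_of_le hEq.symm (le_foldl_nstep he _ b' hb'S').1)
      · -- contraction step
        have hu : a' ≤ a * (1 - d) + e p.1 * p.2 := by
          rw [ha'def, nstep_eq _ _ _ _ _ hep] at h ⊢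
          rcases max_cases (a * (1 - d) + e p.1 * p.2) a with ⟨hm, _⟩ | ⟨hm, hle⟩
          · rw [hm]; exact le_trans (min_le_left _ _) le_rfl
          · rw [hm] at h
            exact absurd (min_le_left _ S) (by intro hh; exact absurd (lt_of_lt_of_le h hh) (lt_irrefl a))
        have hl : b * (1 - d) + e p.1 * p.2 ≤ b' := by
          rw [hb'def, nstep_eq _ _ _ _ _ hep] at hLt ⊢
          rcases min_cases (max (b * (1 - d) + e p.1 * p.2) b) S' with ⟨hm, _⟩ | ⟨hm, _⟩
          · rw [hm]; exact le_max_left _ _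
          · rw [hm] at hLt; exact absurd hLt (lt_irrefl _)
        have hdef : a' - b' ≤ (a - b) * (1 - d) := by nlinarith
        have hrec := IH a' b' (le_trans hb0 hbb') hb'a' ha'S hb'S' (le_of_lt hk')
        refine le_trans ?_ hrec
        refine min_le_min le_rfl ?_
        have hpow : (a - b) * (1 - d) ^ (1 + kpos S d e L a') =
            ((a - b) * (1 - d)) * (1 - d) ^ (kpos S d e L a') := by
          rw [pow_add, pow_one]; ring
        rw [hpow]
        have : (a' - b') * (1 - d) ^ (kpos S d e L a')
            ≤ ((a - b) * (1 - d)) * (1 - d) ^ (kpos S d e L a') :=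
          mul_le_mul_of_nonneg_right hdef (pow_nonneg (by linarith) _)
        linarith
    · have ha'a : nstep S d e a p = a := le_antisymm (not_lt.1 h) haa'
      rw [if_neg h] at hk ⊢
      rw [if_neg (fun hc => h hc.1)]
      simp only [List.foldl_cons, zero_add] at hk ⊢
      rw [ha'a] at hk ⊢
      exact IH a b hb0 hba haS hbS' hk

lemma main_lemma (he : ∀ i, 0 < e i) (hd0 : 0 ≤ d) (hd1 : d ≤ 1) (hSS : S' ≤ S) (m : ℕ)
    (L : List (W × ℝ)) : ∀ (a b : ℝ), 0 ≤ b → b ≤ a → a ≤ S → b ≤ S' →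
    min S' (L.foldl (nstep S d e) a - (S - b) * (1 - d) ^ (min (kpos S d e L a) m))
      ≤ (sel S d e L a m).foldl (nstep S' d e) b := by
  induction L with
  | nil =>
    intro a b hb0 hba haS hbS'
    simp only [kpos, sel, List.foldl_nil, Nat.zero_min, pow_zero]
    exact le_trans (min_le_right _ _) (by linarith)
  | cons p L IH =>
    intro a b hb0 hba haS hbS'
    have hep := he p.1
    have haa' : a ≤ nstep S d e a p := le_nstep hep haS
    have ha'S : nstep S d e a p ≤ S := nstep_le hep
    by_cases h : a < nstep S d e a p
    · by_cases hk' : kpos S d e L (nstep S d e a p) < m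
      · -- keep phase: total positive count ≤ m
        have hkle : kpos S d e (p :: L) a ≤ m := by
          rw [kpos, if_pos h]; omega
        have hklem := keep_lemma he hd0 hd1 hSS m (p :: L) a b hb0 hba haS hbS' hkle
        refine le_trans (min_le_min le_rfl ?_) hklem
        rw [min_eq_left hkle]
        have : (a - b) * (1 - d) ^ (kpos S d e (p :: L) a)
            ≤ (S - b) * (1 - d) ^ (kpos S d e (p :: L) a) :=
          mul_le_mul_of_nonneg_right (by linarith) (pow_nonneg (by linarith) _)
        linarith
      · -- drop phase
        rw [kpos, if_pos h, sel, if_neg (fun hc => hk' hc.2)]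
        simp only [List.foldl_cons]
        have h1 : min (1 + kpos S d e L (nstep S d e a p)) m = m :=
          min_eq_right (by omega)
        have h2 : min (kpos S d e L (nstep S d e a p)) m = m :=
          min_eq_right (by omega)
        rw [h1]
        have := IH (nstep S d e a p) b hb0 (le_trans hba haa') ha'S hbS'
        rw [h2] at this
        exact this
    · have ha'a : nstep S d e a p = a := le_antisymm (not_lt.1 h) haa'
      rw [kpos, if_neg h, sel, if_neg (fun hc => h hc.1)]
      simp only [List.foldl_cons, zero_add]
      rw [ha'a]
      exact IH a b hb0 hba haS hbS'

lemma node_lemma (he : ∀ i, 0 < e i) (hd0 : 0 < d) (hd1 : d ≤ 1) {S ε : ℝ} (hS : 0 < S)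
    (hε : 0 < ε) (hε1 : ε < 1) (m : ℕ) (hm : (1 - d) ^ m ≤ ε)
    (L : List (W × ℝ)) (hrun : L.foldl (nstep S d e) 0 = S) :
    (sel S d e L 0 m).foldl (nstep ((1 - ε) * S) d e) 0 = (1 - ε) * S := by
  have hS' : 0 < (1 - ε) * S := mul_pos (by linarith) hS
  have hSS : (1 - ε) * S ≤ S := by nlinarith
  have hup : (sel S d e L 0 m).foldl (nstep ((1 - ε) * S) d e) 0 ≤ (1 - ε) * S :=
    (le_foldl_nstep he _ 0 hS'.le).2
  have hlow : (1 - ε) * S ≤ (sel S d e L 0 m).foldl (nstep ((1 - ε) * S) d e) 0 := by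
    by_cases hk : kpos S d e L 0 ≤ m
    · have := keep_lemma (S' := (1 - ε) * S) he hd0.le hd1 hSS m L 0 0 le_rfl le_rfl
        hS.le hS'.le hk
      rw [hrun] at this
      refine le_trans ?_ this
      rw [sub_zero, zero_mul, sub_zero, min_eq_left hSS]
    · have := main_lemma (S' := (1 - ε) * S) he hd0.le hd1 hSS m L 0 0 le_rfl le_rfl
        hS.le hS'.le
      have hmin : min (kpos S d e L 0) m = m := min_eq_right (by omega)
      rw [hrun, hmin] at this
      refine le_trans ?_ this
      have h1 : S - (S - 0) * (1 - d) ^ m ≥ S - S * ε := by nlinarith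
      have h2 : (1 - ε) * S ≤ S - (S - 0) * (1 - d) ^ m := by nlinarith
      exact le_min le_rfl h2
  exact le_antisymm hup hlow

lemma pow_one_sub_le {d ε : ℝ} (hd0 : 0 < d) (hd1 : d ≤ 1) (hε : 0 < ε)
    (m : ℕ) (hm : (1 / d) * Real.log (1 / ε) ≤ (m : ℝ)) : (1 - d) ^ m ≤ ε := by
  have h1 : (1 : ℝ) - d ≤ Real.exp (-d) := by linarith [Real.add_one_le_exp (-d)]
  have h2 : (1 - d) ^ m ≤ (Real.exp (-d)) ^ m :=
    pow_le_pow_left₀ (by linarith) h1 m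
  have h3 : (Real.exp (-d)) ^ m = Real.exp (-(d * m)) := by
    rw [← Real.exp_nat_mul]; ring_nf
  have hlog : Real.log (1 / ε) = -Real.log ε := by rw [one_div, Real.log_inv]
  have h4 : -Real.log ε ≤ d * m := by
    have := mul_le_mul_of_nonneg_left hm hd0.le
    rw [hlog] at this
    calc -Real.log ε = d * ((1 / d) * (-Real.log ε)) := by field_simp
      _ ≤ d * m := this
  have h5 : Real.exp (-(d * m)) ≤ ε := by
    rw [← Real.exp_log hε]
    exact Real.exp_le_exp.2 (by linarith)
  calc (1 - d) ^ m ≤ (Real.exp (-d)) ^ m := h2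
    _ = Real.exp (-(d * m)) := h3
    _ ≤ ε := h5

lemma sum_map_filter_eq [DecidableEq W] (J : Finset W) (g : W × ℝ → ℝ) :
    ∀ L : List (W × ℝ), (∀ p ∈ L, p.1 ∈ J) →
    (L.map g).sum = ∑ i ∈ J, ((L.filter (fun p => p.1 = i)).map g).sum := by
  intro L
  induction L with
  | nil => simp
  | cons p L IH =>
    intro hmem
    have hIH := IH (fun q hq => hmem q (List.mem_cons_of_mem _ hq))
    have hp1 : p.1 ∈ J := hmem p (List.mem_cons_self)
    simp only [List.map_cons, List.sum_cons]
    calc g p + (L.map g).sum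
        = g p + ∑ i ∈ J, ((L.filter (fun q => q.1 = i)).map g).sum := by rw [hIH]
      _ = ∑ i ∈ J, (((L.filter (fun q => q.1 = i)).map g).sum
            + if p.1 = i then g p else 0) := by
          rw [Finset.sum_add_distrib, Finset.sum_ite_eq J p.1 (fun _ => g p), if_pos hp1]
          ring
      _ = ∑ i ∈ J, (((p :: L).filter (fun q => q.1 = i)).map g).sum := by
          refine Finset.sum_congr rfl (fun i hi => ?_)
          rw [List.filter_cons]
          by_cases h : p.1 = i
          · simp [h, add_comm]
          · simp [h]

lemma map_mul_of_fst_eq (f : W → ℝ) (i : W) :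
    ∀ L : List (W × ℝ), (∀ p ∈ L, p.1 = i) →
    (L.map (fun p => f p.1 * p.2)).sum = f i * (L.map Prod.snd).sum := by
  intro L
  induction L with
  | nil => simp
  | cons p L IH =>
    intro h
    simp only [List.map_cons, List.sum_cons, IH (fun q hq => h q (List.mem_cons_of_mem _ hq)),
      h p (List.mem_cons_self)]
    ring

end Aux

section Graph
variable {V : Type*} [Fintype V] [DecidableEq V] {W : Type*} [DecidableEq W]

lemma mem_N_edge (G : TaskGraph V) {u v : V} (hu : u ∈ G.N v) : (u, v) ∈ G.E := by
  unfold TaskGraph.N at hu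
  obtain ⟨p, hp, hpu⟩ := Finset.mem_image.1 hu
  obtain ⟨hpE, hp2⟩ := Finset.mem_filter.1 hp
  rwa [show (u, v) = p from (Prod.ext hpu hp2).symm]

lemma prereqCost_nonneg (G : TaskGraph V) (e : W → V → ℝ) (he : ∀ i v, 0 < e i v)
    (i : W) (v : V) : 0 ≤ prereqCost G e i v := by
  refine Finset.sum_nonneg (fun u hu => ?_)
  have hE := G.dEdge_mem _ (mem_N_edge G hu)
  exact div_nonneg (mul_nonneg (G.s_pos u).le hE.1) (he i u).le

lemma capacity_set_bdd (G : TaskGraph V) (t : W → ℝ) (e : W → V → ℝ)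
    (ht : ∀ i, 0 < t i) (he : ∀ i v, 0 < e i v) (J : Finset W) :
    BddAbove {x : ℝ | ∃ (c : ℝ) (hc : 0 < c) (A : Assignment V W),
      Feasible (G.scale c hc) t e A ∧ (∀ v, ∀ p ∈ A v, p.1 ∈ (↑J : Set W)) ∧
      x = ∑ v : V, c * G.s v} := by
  refine ⟨∑ i ∈ J, (∑ v : V, e i v) * t i, ?_⟩
  rintro x ⟨c, hc, A, ⟨hpos, hV, hT⟩, hmem, rfl⟩
  set fsum : W → V → ℝ :=
    fun i v => (((A v).filter (fun p => p.1 = i)).map Prod.snd).sum with hfsum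
  have hfsum_nonneg : ∀ i v, 0 ≤ fsum i v := by
    intro i v
    refine List.sum_nonneg (fun r hr => ?_)
    obtain ⟨p, hp, rfl⟩ := List.mem_map.1 hr
    exact hpos v p (List.mem_of_mem_filter hp)
  have hfsum_t : ∀ i ∈ J, ∑ v : V, fsum i v ≤ t i := by
    intro i _
    refine le_trans ?_ (hT i)
    unfold workerTime
    refine Finset.sum_le_sum (fun v _ => ?_)
    have : (0:ℝ) ≤ if i ∈ (A v).map Prod.fst then prereqCost (G.scale c hc) e i v else 0 := by
      split_ifs
      · exact prereqCost_nonneg _ e he i v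
      · exact le_rfl
    linarith
  have key : ∀ v, c * G.s v ≤ ((A v).map (fun p => e p.1 v * p.2)).sum := by
    intro v
    have hrun : (A v).foldl (nstep (c * G.s v) (G.dNode v) (fun i => e i v)) 0 = c * G.s v :=
      hV v
    have hb := foldl_nstep_le (fun i => he i v) (G.dNode_mem v).1 (A v) 0 le_rfl
      (mul_pos hc (G.s_pos v)).le (hpos v)
    rw [hrun] at hb
    simpa using hb
  calc ∑ v : V, c * G.s v ≤ ∑ v : V, ((A v).map (fun p => e p.1 v * p.2)).sum :=
        Finset.sum_le_sum (fun v _ => key v)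
    _ = ∑ v : V, ∑ i ∈ J, (((A v).filter (fun p => p.1 = i)).map (fun p => e p.1 v * p.2)).sum := by
        refine Finset.sum_congr rfl (fun v _ => ?_)
        exact sum_map_filter_eq J _ (A v) (fun p hp => hmem v p hp)
    _ = ∑ v : V, ∑ i ∈ J, e i v * fsum i v := by
        refine Finset.sum_congr rfl (fun v _ => Finset.sum_congr rfl (fun i _ => ?_))
        exact map_mul_of_fst_eq (fun j => e j v) i _
          (fun q hq => of_decide_eq_true (List.mem_filter.1 hq).2)
    _ = ∑ i ∈ J, ∑ v : V, e i v * fsum i v := Finset.sum_comm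
    _ ≤ ∑ i ∈ J, (∑ v : V, e i v) * t i := by
        refine Finset.sum_le_sum (fun i hi => ?_)
        have h1 : ∀ v ∈ (Finset.univ : Finset V), e i v * fsum i v ≤ (∑ v' : V, e i v') * fsum i v := by
          intro v _
          refine mul_le_mul_of_nonneg_right ?_ (hfsum_nonneg i v)
          exact Finset.single_le_sum (fun v' _ => (he i v').le) (Finset.mem_univ v)
        calc ∑ v : V, e i v * fsum i v ≤ ∑ v : V, (∑ v' : V, e i v') * fsum i v :=
              Finset.sum_le_sum h1
          _ = (∑ v' : V, e i v') * ∑ v : V, fsum i v := by rw [Finset.mul_sum]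
          _ ≤ (∑ v' : V, e i v') * t i :=
              mul_le_mul_of_nonneg_left (hfsum_t i hi)
                (Finset.sum_nonneg (fun v' _ => (he i v').le))

end Graph

/-- top workers approximate the work capacity.  If `d_v > 0` for every node,
then for any finite worker set `I` and `ε ∈ (0,1)` there is a subset `I(ε) ⊆ I` with at most
`Σ_v ⌈(1/d_v) ln(1/ε)⌉` workers achieving at least a `(1 - ε)` fraction of the work capacity. -/
theorem top_workers_approximate_capacity (G : TaskGraph V) (hd : ∀ v, 0 < G.dNode v)
    {W : Type*} [DecidableEq W] (I : Finset W)
    (t : W → ℝ) (ht : ∀ i, 0 < t i) (e : W → V → ℝ) (he : ∀ i v, 0 < e i v)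
    (ε : ℝ) (hε : 0 < ε) (hε1 : ε < 1) :
    ∃ Iε : Finset W, Iε ⊆ I ∧
      (Iε.card : ℤ) ≤ ∑ v : V, ⌈(1 / G.dNode v) * Real.log (1 / ε)⌉ ∧
      (1 - ε) * capacityOn G t e (↑I : Set W) ≤ capacityOn G t e (↑Iε : Set W) := by
  classical
  set M : ℤ := ∑ v : V, ⌈(1 / G.dNode v) * Real.log (1 / ε)⌉ with hM
  have hceil_nonneg : ∀ v : V, (0:ℤ) ≤ ⌈(1 / G.dNode v) * Real.log (1 / ε)⌉ := by
    intro v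
    refine Int.ceil_nonneg (mul_nonneg (by have := hd v; positivity) (Real.log_nonneg ?_))
    rw [le_one_div (by norm_num) hε]
    · linarith
  have hM0 : 0 ≤ M := Finset.sum_nonneg (fun v _ => hceil_nonneg v)
  set F : Finset (Finset W) := I.powerset.filter (fun J => (J.card : ℤ) ≤ M) with hF
  have hFne : F.Nonempty := ⟨∅, by
    refine Finset.mem_filter.2 ⟨Finset.empty_mem_powerset I, by simpa using hM0⟩⟩
  obtain ⟨Jstar, hJstarF, hmax⟩ :=
    F.exists_max_image (fun J => capacityOn G t e (↑J : Set W)) hFne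
  obtain ⟨hJstarI, hJstarcard⟩ := Finset.mem_filter.1 hJstarF
  refine ⟨Jstar, Finset.mem_powerset.1 hJstarI, hJstarcard, ?_⟩
  have hd1 : ∀ v, G.dNode v ≤ 1 := fun v => (G.dNode_mem v).2
  -- the key claim
  have key : ∀ x ∈ {x : ℝ | ∃ (c : ℝ) (hc : 0 < c) (A : Assignment V W),
      Feasible (G.scale c hc) t e A ∧ (∀ v, ∀ p ∈ A v, p.1 ∈ (↑I : Set W)) ∧
      x = ∑ v : V, c * G.s v},
      (1 - ε) * x ≤ capacityOn G t e (↑Jstar : Set W) := by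
    rintro x ⟨c, hc, A, ⟨hpos, hV, hT⟩, hmem, rfl⟩
    set m : V → ℕ := fun v => (⌈(1 / G.dNode v) * Real.log (1 / ε)⌉).toNat with hm
    set A' : Assignment V W := fun v =>
      sel (c * G.s v) (G.dNode v) (fun i => e i v) (A v) 0 (m v) with hA'
    have hsub : ∀ v, List.Sublist (A' v) (A v) := fun v => sel_sublist _ _ _ _ _ _
    set J : Finset W := Finset.univ.biUnion (fun v => ((A' v).map Prod.fst).toFinset) with hJ
    have hmemJ : ∀ v, ∀ p ∈ A' v, p.1 ∈ (↑J : Set W) := by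
      intro v p hp
      refine Finset.mem_coe.2 (Finset.mem_biUnion.2 ⟨v, Finset.mem_univ v, ?_⟩)
      exact List.mem_toFinset.2 (List.mem_map_of_mem (f := Prod.fst) hp)
    have hJI : J ⊆ I := by
      intro i hi
      obtain ⟨v, _, hiv⟩ := Finset.mem_biUnion.1 hi
      obtain ⟨p, hp, rfl⟩ := List.mem_map.1 (List.mem_toFinset.1 hiv)
      exact Finset.mem_coe.1 (hmem v p ((hsub v).subset hp))
    have hJF : J ∈ F := by
      refine Finset.mem_filter.2 ⟨Finset.mem_powerset.2 hJI, ?_⟩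
      have h1 : J.card ≤ ∑ v : V, ((A' v).map Prod.fst).toFinset.card :=
        Finset.card_biUnion_le
      have h2 : ∀ v : V, ((A' v).map Prod.fst).toFinset.card ≤ m v := by
        intro v
        refine le_trans (List.toFinset_card_le ((A' v).map Prod.fst)) ?_
        rw [List.length_map]
        exact (sel_length _ _ _ _ _ _).2
      have h3 : J.card ≤ ∑ v : V, m v := le_trans h1 (Finset.sum_le_sum (fun v _ => h2 v))
      have h4 : (J.card : ℤ) ≤ ∑ v : V, (m v : ℤ) := by exact_mod_cast h3
      refine le_trans h4 (le_of_eq (Finset.sum_congr rfl (fun v _ => ?_)))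
      exact Int.toNat_of_nonneg (hceil_nonneg v)
    have hc' : 0 < (1 - ε) * c := mul_pos (by linarith) hc
    have hmv : ∀ v, (1 - G.dNode v) ^ (m v) ≤ ε := by
      intro v
      refine pow_one_sub_le (hd v) (hd1 v) hε (m v) ?_
      have h1 : ((1 / G.dNode v) * Real.log (1 / ε)) ≤ ((⌈(1 / G.dNode v) * Real.log (1 / ε)⌉ : ℤ) : ℝ) :=
        Int.le_ceil _
      have h2 : ((m v : ℕ) : ℝ) = ((⌈(1 / G.dNode v) * Real.log (1 / ε)⌉ : ℤ) : ℝ) := by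
        rw [hm]
        exact_mod_cast congrArg (fun n : ℤ => (n : ℝ)) (Int.toNat_of_nonneg (hceil_nonneg v))
      rw [h2]
      exact h1
    have hVF : ∀ v, VFeasible (G.scale ((1 - ε) * c) hc') e A' v := by
      intro v
      have hrun : (A v).foldl (nstep (c * G.s v) (G.dNode v) (fun i => e i v)) 0 = c * G.s v :=
        hV v
      have hnode := node_lemma (fun i => he i v) (hd v) (hd1 v)
        (mul_pos hc (G.s_pos v)) hε hε1 (m v) (hmv v) (A v) hrun
      show workAfter ((1 - ε) * c * G.s v) (G.dNode v) (fun i => e i v) (A' v)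
        = (1 - ε) * c * G.s v
      have hassoc : (1 - ε) * c * G.s v = (1 - ε) * (c * G.s v) := by ring
      rw [hassoc]
      exact hnode
    have hfeas' : Feasible (G.scale ((1 - ε) * c) hc') t e A' := by
      refine ⟨fun v p hp => hpos v p ((hsub v).subset hp), hVF, ?_⟩
      intro i
      refine le_trans ?_ (hT i)
      unfold workerTime
      refine Finset.sum_le_sum (fun v _ => ?_)
      have hf1 : (((A' v).filter (fun p => p.1 = i)).map Prod.snd).sum
          ≤ (((A v).filter (fun p => p.1 = i)).map Prod.snd).sum := by
        refine List.Sublist.sum_le_sum (((hsub v).filter _).map Prod.snd) ?_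
        intro r hr
        obtain ⟨p, hp, rfl⟩ := List.mem_map.1 hr
        exact hpos v p (List.mem_of_mem_filter hp)
      have hf2 : (if i ∈ (A' v).map Prod.fst then prereqCost (G.scale ((1 - ε) * c) hc') e i v else 0)
          ≤ (if i ∈ (A v).map Prod.fst then prereqCost (G.scale c hc) e i v else 0) := by
        by_cases hi : i ∈ (A' v).map Prod.fst
        · rw [if_pos hi, if_pos (((hsub v).map Prod.fst).subset hi)]
          unfold prereqCost
          refine Finset.sum_le_sum (fun u hu => ?_)
          have hE := (G.scale c hc).dEdge_mem _ (mem_N_edge (G.scale c hc) hu)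
          refine (div_le_div_iff_of_pos_right (he i u)).2 ?_
          show (1 - ε) * c * G.s u * G.dEdge u v ≤ c * G.s u * G.dEdge u v
          have h9 : c * G.s u * G.dEdge u v - (1 - ε) * c * G.s u * G.dEdge u v
              = ε * (c * (G.s u * G.dEdge u v)) := by ring
          have h10 : 0 ≤ ε * (c * (G.s u * G.dEdge u v)) :=
            mul_nonneg hε.le (mul_nonneg hc.le (mul_nonneg (G.s_pos u).le hE.1))
          linarith
        · rw [if_neg hi]
          split_ifs
          · exact prereqCost_nonneg _ e he i v
          · exact le_rfl
      exact add_le_add hf1 hf2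
    have hxmem : (1 - ε) * (∑ v : V, c * G.s v) ∈ {x : ℝ | ∃ (c : ℝ) (hc : 0 < c) (A : Assignment V W),
        Feasible (G.scale c hc) t e A ∧ (∀ v, ∀ p ∈ A v, p.1 ∈ (↑J : Set W)) ∧
        x = ∑ v : V, c * G.s v} := by
      refine ⟨(1 - ε) * c, hc', A', hfeas', hmemJ, ?_⟩
      rw [Finset.mul_sum]
      exact Finset.sum_congr rfl (fun v _ => by ring)
    have hle : (1 - ε) * (∑ v : V, c * G.s v) ≤ capacityOn G t e (↑J : Set W) :=
      le_csSup (capacity_set_bdd G t e ht he J) hxmem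
    exact le_trans hle (hmax J hJF)
  -- conclude
  by_cases hne : {x : ℝ | ∃ (c : ℝ) (hc : 0 < c) (A : Assignment V W),
      Feasible (G.scale c hc) t e A ∧ (∀ v, ∀ p ∈ A v, p.1 ∈ (↑I : Set W)) ∧
      x = ∑ v : V, c * G.s v}.Nonempty
  · have h1 : capacityOn G t e (↑I : Set W) ≤ capacityOn G t e (↑Jstar : Set W) / (1 - ε) := by
      refine csSup_le hne (fun x hx => ?_)
      rw [le_div_iff₀ (by linarith : (0:ℝ) < 1 - ε)]
      calc x * (1 - ε) = (1 - ε) * x := mul_comm _ _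
        _ ≤ capacityOn G t e (↑Jstar : Set W) := key x hx
    calc (1 - ε) * capacityOn G t e (↑I : Set W)
        ≤ (1 - ε) * (capacityOn G t e (↑Jstar : Set W) / (1 - ε)) :=
          mul_le_mul_of_nonneg_left h1 (by linarith)
      _ = capacityOn G t e (↑Jstar : Set W) := by
          have hne0 : (1:ℝ) - ε ≠ 0 := by linarith
          field_simp
  · have hemp : {x : ℝ | ∃ (c : ℝ) (hc : 0 < c) (A : Assignment V W),
        Feasible (G.scale c hc) t e A ∧ (∀ v, ∀ p ∈ A v, p.1 ∈ (↑I : Set W)) ∧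
        x = ∑ v : V, c * G.s v} = ∅ := Set.not_nonempty_iff_eq_empty.1 hne
    have h0 : capacityOn G t e (↑I : Set W) = 0 := by
      unfold capacityOn
      rw [hemp, Real.sSup_empty]
    rw [h0, mul_zero]
    refine Real.sSup_nonneg (fun x hx => ?_)
    obtain ⟨c, hc, A, _, _, rfl⟩ := hx
    exact Finset.sum_nonneg (fun v _ => (mul_pos hc (G.s_pos v)).le)
end

section
/- Let 0 < d < 1, let ε ∈ (0,1), let n₁ and n₂ be natural numbers with n = n₁ + n₂ and (1−d)^{n₁} ≤ ε, and let 0 ≤ a₁ ≤ a₂ ≤ … ≤ a_n be a nondecreasing sequence of nonnegative reals. Then Σ_{i=1}^{n₂} a_i·(1−d)^{n−i} ≤ ε·Σ_{i=1}^{n} a_i·(1−d)^{n−i}. -/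
/-- key estimate behind the top-workers theorem.  For a nondecreasing
nonnegative sequence `a 1 ≤ … ≤ a n` with `n = n₁ + n₂` and `(1 - d)^{n₁} ≤ ε`, dropping the
`n₂` weakest workers loses at most an `ε` fraction of the geometric-weighted total:
`Σ_{i=1}^{n₂} a i (1-d)^{n-i} ≤ ε Σ_{i=1}^{n} a i (1-d)^{n-i}`. -/
theorem drop_weak_workers (d ε : ℝ) (hd : 0 < d) (hd1 : d < 1) (hε : 0 < ε) (hε1 : ε < 1)
    (n₁ n₂ n : ℕ) (hn : n = n₁ + n₂) (h1 : (1 - d) ^ n₁ ≤ ε)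
    (a : ℕ → ℝ) (ha0 : ∀ i, 1 ≤ i → i ≤ n → 0 ≤ a i)
    (hmono : ∀ i j, 1 ≤ i → i ≤ j → j ≤ n → a i ≤ a j) :
    ∑ i ∈ Finset.Icc 1 n₂, a i * (1 - d) ^ (n - i) ≤
      ε * ∑ i ∈ Finset.Icc 1 n, a i * (1 - d) ^ (n - i) := by
  subst hn
  have hc0 : (0:ℝ) ≤ 1 - d := by linarith
  have key : ∀ i ∈ Finset.Icc 1 n₂,
      a i * (1 - d) ^ (n₁ + n₂ - i) ≤
        ε * (a (i + n₁) * (1 - d) ^ (n₁ + n₂ - (i + n₁))) := by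
    intro i hi
    simp only [Finset.mem_Icc] at hi
    obtain ⟨h1i, h2i⟩ := hi
    have hpow : (1 - d) ^ (n₁ + n₂ - i) = (1 - d) ^ n₁ * (1 - d) ^ (n₁ + n₂ - (i + n₁)) := by
      rw [← pow_add]; congr 1; omega
    have ha : a i ≤ a (i + n₁) := hmono i (i + n₁) h1i (by omega) (by omega)
    have ha0i : 0 ≤ a i := ha0 i h1i (by omega)
    have ha0i' : 0 ≤ a (i + n₁) := le_trans ha0i ha
    calc a i * (1 - d) ^ (n₁ + n₂ - i)
        = a i * (1 - d) ^ n₁ * (1 - d) ^ (n₁ + n₂ - (i + n₁)) := by rw [hpow]; ring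
      _ ≤ a (i + n₁) * ε * (1 - d) ^ (n₁ + n₂ - (i + n₁)) := by
          apply mul_le_mul_of_nonneg_right _ (pow_nonneg hc0 _)
          exact mul_le_mul ha h1 (pow_nonneg hc0 _) ha0i'
      _ = ε * (a (i + n₁) * (1 - d) ^ (n₁ + n₂ - (i + n₁))) := by ring
  have step1 := Finset.sum_le_sum key
  rw [← Finset.mul_sum] at step1
  refine step1.trans ?_
  apply mul_le_mul_of_nonneg_left _ hε.le
  have reindex : ∑ i ∈ Finset.Icc 1 n₂, a (i + n₁) * (1 - d) ^ (n₁ + n₂ - (i + n₁)) =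
      ∑ j ∈ Finset.Icc (n₁ + 1) (n₁ + n₂), a j * (1 - d) ^ (n₁ + n₂ - j) := by
    rw [← Finset.map_add_left_Icc]
    rw [Finset.sum_map]
    simp [addLeftEmbedding, add_comm]
  rw [reindex]
  apply Finset.sum_le_sum_of_subset_of_nonneg
  · exact Finset.Icc_subset_Icc_left (by omega)
  · intro j hj _
    simp only [Finset.mem_Icc] at hj
    exact mul_nonneg (ha0 j hj.1 hj.2) (pow_nonneg hc0 _)
end

section
/- Let M > 1, τ > 0, e_normal > 0, e_novice = e_normal/M, and let (V,E,s,d) be the shared task graph of a uniform task ecosystem. Define LPP-accessibility as the least predicate on nodes such that v is LPP-accessible whenever there exists a set P of LPP-accessible nodes with s_v/e_novice + Σ_{u∈N(v)∖P} s_u·d_{uv}/e_novice + Σ_{u∈N(v)∩P} s_u·d_{uv}/e_normal ≤ τ. For a node v, let T_v = (s_v + Σ_{u∈N(v)} s_u·d_{uv})/e_normal, let P be the set of ALL LPP-accessible prerequisites of v, and let α_v = (Σ_{u∈N(v)∩P} s_u·d_{uv}/e_normal)/T_v be the fraction of T_v spent on context costs for subtask types in P. If T_v > 0, then v is LPP-accessible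 if and only if α_v ≥ (M·T_v − τ)/(M·T_v − T_v). -/
open Finset Filter

variable {V : Type*} [Fintype V] [DecidableEq V]

/-- LPP-accessibility: the least predicate on subtask types such that `v` is LPP-accessible
whenever there is a set `P` of LPP-accessible subtask types with
`s_v/e_novice + Σ_{u ∈ N(v)∖P} s_u d_{uv}/e_novice + Σ_{u ∈ N(v)∩P} s_u d_{uv}/e_normal ≤ τ`. -/
inductive LPPAccessible (G : TaskGraph V) (enovice enormal τ : ℝ) : V → Prop
  | step (v : V) (P : Finset V) (hP : ∀ u ∈ P, LPPAccessible G enovice enormal τ u)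
      (h : G.s v / enovice
          + ∑ u ∈ (G.N v) \ P, G.s u * G.dEdge u v / enovice
          + ∑ u ∈ (G.N v) ∩ P, G.s u * G.dEdge u v / enormal ≤ τ) :
      LPPAccessible G enovice enormal τ v

/-- LPP requires appropriate interdependencies.  With `P` the set of all
LPP-accessible prerequisites of `v` and `α_v` the fraction of `T_v` spent on context costs for
subtask types in `P`, the subtask type `v` is LPP-accessible if and only if
`α_v ≥ (M T_v − τ) / (M T_v − T_v)`. -/
theorem lpp_accessible_iff (G : TaskGraph V) (M τ enormal enovice : ℝ)
    (hM : 1 < M) (hτ : 0 < τ) (he : 0 < enormal) (hen : enovice = enormal / M)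
    (v : V) (Tv αv : ℝ)
    (hT : Tv = (G.s v + ∑ u ∈ G.N v, G.s u * G.dEdge u v) / enormal)
    (hTpos : 0 < Tv)
    (P : Finset V)
    (hPdef : ∀ u, u ∈ P ↔ u ∈ G.N v ∧ LPPAccessible G enovice enormal τ u)
    (hα : αv = (∑ u ∈ (G.N v) ∩ P, G.s u * G.dEdge u v / enormal) / Tv) :
    LPPAccessible G enovice enormal τ v ↔ αv ≥ (M * Tv - τ) / (M * Tv - Tv) := by
  have hM0 : (0:ℝ) < M := lt_trans one_pos hM
  have hen_pos : 0 < enovice := by rw [hen]; exact div_pos he hM0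
  set f : V → ℝ := fun u => G.s u * G.dEdge u v with hf
  have hfnn : ∀ u ∈ G.N v, 0 ≤ f u := by
    intro u hu
    have hmem : (u, v) ∈ G.E := by
      simp only [TaskGraph.N, Finset.mem_image, Finset.mem_filter] at hu
      obtain ⟨p, ⟨hpE, hp2⟩, hp1⟩ := hu
      have : p = (u, v) := by
        cases p; simp_all
      rwa [this] at hpE
    exact mul_nonneg (G.s_pos u).le (G.dEdge_mem _ hmem).1
  have key : ∀ Q : Finset V,
      G.s v / enovice + ∑ u ∈ G.N v \ Q, f u / enovice + ∑ u ∈ G.N v ∩ Q, f u / enormal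
        = M * Tv - (M - 1) * ((∑ u ∈ G.N v ∩ Q, f u) / enormal) := by
    intro Q
    have hsplit : ∑ u ∈ G.N v ∩ Q, f u + ∑ u ∈ G.N v \ Q, f u = ∑ u ∈ G.N v, f u :=
      Finset.sum_inter_add_sum_sdiff _ _ _
    rw [← Finset.sum_div, ← Finset.sum_div, hen, hT, ← hsplit]
    field_simp
    ring
  have hMT : 0 < M * Tv - Tv := by nlinarith
  have halg : ∀ c : ℝ, (M * Tv - (M - 1) * c ≤ τ ↔ (M * Tv - τ) / (M * Tv - Tv) ≤ c / Tv) := by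
    intro c
    rw [div_le_div_iff₀ hMT hTpos]
    constructor <;> intro h <;> nlinarith [hTpos]
  have hαeq : αv = ((∑ u ∈ G.N v ∩ P, f u) / enormal) / Tv := by
    rw [hα, ← Finset.sum_div]
  constructor
  · intro h
    cases h with
    | step _ Q hQ hle =>
      have hsub : G.N v ∩ Q ⊆ G.N v ∩ P := by
        intro u hu
        rw [Finset.mem_inter] at hu ⊢
        exact ⟨hu.1, (hPdef u).2 ⟨hu.1, hQ u hu.2⟩⟩
      have hCle : ∑ u ∈ G.N v ∩ Q, f u ≤ ∑ u ∈ G.N v ∩ P, f u :=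
        Finset.sum_le_sum_of_subset_of_nonneg hsub
          (fun u hu _ => hfnn u (Finset.mem_inter.mp hu).1)
      rw [key Q] at hle
      rw [ge_iff_le, hαeq, ← halg]
      have hdiv : (∑ u ∈ G.N v ∩ Q, f u) / enormal ≤ (∑ u ∈ G.N v ∩ P, f u) / enormal := by
        gcongr
      nlinarith [hdiv]
  · intro h
    refine LPPAccessible.step v P (fun u hu => ((hPdef u).1 hu).2) ?_
    rw [key P]
    rw [ge_iff_le, hαeq, ← halg] at h
    exact h
end

section
/- Let τ > 0, let s_{O*} > 0 and C* > 0 with (2/3)·τ ≤ C* < τ, and let O be an occupation with size s_O satisfying s_{O*}/J ≤ s_O ≤ s_{O*} (where J ≥ 1 is the multiplicative gap between the largest and smallest occupational sizes) and coordination intensity C_O ≥ 0 with α = C_O/C* ≤ 1/2. Let ρ_O = s_O/(τ − C_O). Then α + ln(s_{O*}/(2·J·C*)) ≤ ln(ρ_O) ≤ 2α + ln(s_{O*}/C*). -/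
/-- coordination intensity and log required expertise.  If
`(2/3) τ ≤ C* < τ`, `s_{O*}/J ≤ s_O ≤ s_{O*}` with `J ≥ 1`, and `α = C_O/C* ≤ 1/2`, then with
`ρ_O = s_O/(τ − C_O)`:  `α + ln(s_{O*}/(2 J C*)) ≤ ln ρ_O ≤ 2α + ln(s_{O*}/C*)`. -/
theorem coordination_wages (τ sO sOs Cs CO J α ρO : ℝ)
    (hτ : 0 < τ) (hsOs : 0 < sOs) (hCs : 0 < Cs)
    (hCslb : (2 / 3) * τ ≤ Cs) (hCsub : Cs < τ)
    (hJ : 1 ≤ J) (hsOlb : sOs / J ≤ sO) (hsOub : sO ≤ sOs)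
    (hCO : 0 ≤ CO) (hα : α = CO / Cs) (hα2 : α ≤ 1 / 2)
    (hρO : ρO = sO / (τ - CO)) :
    α + Real.log (sOs / (2 * J * Cs)) ≤ Real.log ρO ∧
      Real.log ρO ≤ 2 * α + Real.log (sOs / Cs) := by
  have hJ0 : (0:ℝ) < J := lt_of_lt_of_le one_pos hJ
  have hα0 : 0 ≤ α := by rw [hα]; positivity
  have hCOeq : CO = α * Cs := by rw [hα]; field_simp
  have ht : Cs / 2 ≤ τ - CO := by nlinarith
  have ht0 : 0 < τ - CO := by linarith
  have hsO0 : 0 < sO := lt_of_lt_of_le (div_pos hsOs hJ0) hsOlb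
  have hlog : Real.log ρO = Real.log sO - Real.log (τ - CO) := by
    rw [hρO, Real.log_div hsO0.ne' ht0.ne']
  have hsOlog : Real.log sO ≤ Real.log sOs := Real.log_le_log hsO0 hsOub
  have hsOlog' : Real.log sOs - Real.log J ≤ Real.log sO := by
    have h := Real.log_le_log (div_pos hsOs hJ0) hsOlb
    rwa [Real.log_div hsOs.ne' hJ0.ne'] at h
  -- upper bound: log (Cs/(τ-CO)) ≤ 2α
  have hub : Real.log Cs - Real.log (τ - CO) ≤ 2 * α := by
    have h1 := Real.log_le_sub_one_of_pos (div_pos hCs ht0)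
    have h2 : Cs / (τ - CO) - 1 ≤ 2 * α := by
      rw [div_sub_one ht0.ne', div_le_iff₀ ht0]
      nlinarith [mul_nonneg hα0 (by linarith : 0 ≤ 2 * (τ - CO) - Cs)]
    rw [Real.log_div hCs.ne' ht0.ne'] at h1
    linarith
  -- lower bound: α ≤ log (2Cs) - log (τ-CO)
  have h2Cs : (0:ℝ) < 2 * Cs := by linarith
  have hlb : α ≤ Real.log (2 * Cs) - Real.log (τ - CO) := by
    have h1 := Real.log_le_sub_one_of_pos (div_pos ht0 h2Cs)
    have h2 : (τ - CO) / (2 * Cs) - 1 ≤ -α := by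
      rw [div_sub_one h2Cs.ne', div_le_iff₀ h2Cs]
      nlinarith
    rw [Real.log_div ht0.ne' h2Cs.ne'] at h1
    linarith
  have hlogJCs : Real.log (sOs / (2 * J * Cs)) =
      Real.log sOs - (Real.log (2 * Cs) + Real.log J) := by
    rw [Real.log_div hsOs.ne' (by positivity), ← Real.log_mul h2Cs.ne' hJ0.ne']
    ring_nf
  have hlogCs : Real.log (sOs / Cs) = Real.log sOs - Real.log Cs :=
    Real.log_div hsOs.ne' hCs.ne'
  constructor
  · rw [hlog, hlogJCs]; linarith
  · rw [hlog, hlogCs]; linarith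
end
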